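/- Let φ^0 be a KLTL formula over P (containing no proposition of 𝕂). There exists an e-strategy λ' : (Σ1'·O)* → Σ1' realizing φ^0 in M_E if and only if there exists a strategy λ : (Σ1·O)* → Σ1 realizing φ^0 in M_E. -/

import Mathlib

open Classical

noncomputable section

/-! ## Environment models (Section 2 of the paper) -/

/-- An environment model `M_E = (P, Σ1, Σ2, S_e, S_0, Δ_e, τ_e)` together with the
set `P_v` of visible propositions (the invisible ones being its complement). -/
structure EnvModel (P σ1 σ2 S : Type) where
  Pv : Set P
  S0 : Set S
  lab : S → Set P
  trans : S → σ1 → σ2 → S → Prop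

namespace EnvModel

variable {P σ1 σ2 S 𝕂 : Type}

/-- The model is deadlock-free. -/
def DeadlockFree (M : EnvModel P σ1 σ2 S) : Prop :=
  ∀ s : S, ∃ a1 a2 s', M.trans s a1 a2 s'

/-- The model is complete for all actions of the system. -/
def SysComplete (M : EnvModel P σ1 σ2 S) : Prop :=
  ∀ (s : S) (a1 : σ1), ∃ a2 s', M.trans s a1 a2 s'

/-- Visible part of the label of a state. -/
def vlab (M : EnvModel P σ1 σ2 S) (s : S) : Set P := M.lab s ∩ M.Pv

/-- The observation (indistinguishability class) of a state. -/
def obsOf (M : EnvModel P σ1 σ2 S) (s : S) : Set S := {s' | M.vlab s' = M.vlab s}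

/-- The set `O` of observations, as a type. -/
def Obs (M : EnvModel P σ1 σ2 S) : Type := {o : Set S // ∃ s, o = M.obsOf s}

/-- The observation of a state, as an element of `Obs`. -/
def obs (M : EnvModel P σ1 σ2 S) (s : S) : M.Obs := ⟨M.obsOf s, s, rfl⟩

/-- The executions of the environment model. -/
def exec (M : EnvModel P σ1 σ2 S) : Set (ℕ → S) :=
  {ρ | ρ 0 ∈ M.S0 ∧ ∀ i, ∃ a1 a2, M.trans (ρ i) a1 a2 (ρ (i + 1))}

/-- Indistinguishability of executions up to position `i` (`ρ ∼_i ρ'`). -/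
def simUpTo (M : EnvModel P σ1 σ2 S) (i : ℕ) (ρ ρ' : ℕ → S) : Prop :=
  ∀ j ≤ i, M.vlab (ρ j) = M.vlab (ρ' j)

end EnvModel

/-! ## KLTL syntax and semantics -/

/-- KLTL formulas over atomic propositions `P` (with the derived operators
`∧` and `□` taken as primitive, as used in the grammar of KLTL⁺). -/
inductive KLTL (P : Type) : Type
  | atom : P → KLTL P
  | not : KLTL P → KLTL P
  | and : KLTL P → KLTL P → KLTL P
  | or : KLTL P → KLTL P → KLTL P
  | next : KLTL P → KLTL P
  | always : KLTL P → KLTL P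
  | untl : KLTL P → KLTL P → KLTL P
  | know : KLTL P → KLTL P

namespace KLTL

variable {P P' A : Type}

/-- Generic KLTL semantics: sequences over `A`, labelled by `lab`, with
indistinguishability-up-to-`i` relations `sim i`.  `R` is the ambient set of
executions used to interpret the knowledge operator. -/
def sat (lab : A → Set P) (sim : ℕ → (ℕ → A) → (ℕ → A) → Prop)
    (R : Set (ℕ → A)) : KLTL P → (ℕ → A) → ℕ → Prop
  | atom p, ρ, i => p ∈ lab (ρ i)
  | not φ, ρ, i => ¬ sat lab sim R φ ρ i
  | and φ ψ, ρ, i => sat lab sim R φ ρ i ∧ sat lab sim R ψ ρ i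
  | or φ ψ, ρ, i => sat lab sim R φ ρ i ∨ sat lab sim R ψ ρ i
  | next φ, ρ, i => sat lab sim R φ ρ (i + 1)
  | always φ, ρ, i => ∀ j, i ≤ j → sat lab sim R φ ρ j
  | untl φ ψ, ρ, i =>
      ∃ j, i ≤ j ∧ sat lab sim R ψ ρ j ∧ ∀ k, i ≤ k → k < j → sat lab sim R φ ρ k
  | know φ, ρ, i => ∀ ρ' ∈ R, sim i ρ ρ' → sat lab sim R φ ρ' i

/-- The positive fragment KLTL⁺: `φ ::= p | ¬p | φ∧φ | φ∨φ | ○φ | □φ | Kφ | φ U φ`. -/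
inductive IsPositive : KLTL P → Prop
  | atom (p : P) : IsPositive (atom p)
  | natom (p : P) : IsPositive (not (atom p))
  | and {φ ψ} : IsPositive φ → IsPositive ψ → IsPositive (and φ ψ)
  | or {φ ψ} : IsPositive φ → IsPositive ψ → IsPositive (or φ ψ)
  | next {φ} : IsPositive φ → IsPositive (next φ)
  | always {φ} : IsPositive φ → IsPositive (always φ)
  | untl {φ ψ} : IsPositive φ → IsPositive ψ → IsPositive (untl φ ψ)
  | know {φ} : IsPositive φ → IsPositive (know φ)

/-- LTL formulas are the KLTL formulas without the knowledge operator. -/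
inductive NoKnow : KLTL P → Prop
  | atom (p : P) : NoKnow (atom p)
  | not {φ} : NoKnow φ → NoKnow (not φ)
  | and {φ ψ} : NoKnow φ → NoKnow ψ → NoKnow (and φ ψ)
  | or {φ ψ} : NoKnow φ → NoKnow ψ → NoKnow (or φ ψ)
  | next {φ} : NoKnow φ → NoKnow (next φ)
  | always {φ} : NoKnow φ → NoKnow (always φ)
  | untl {φ ψ} : NoKnow φ → NoKnow ψ → NoKnow (untl φ ψ)

/-- Subformula relation. -/
inductive Subf : KLTL P → KLTL P → Prop
  | refl (φ) : Subf φ φ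
  | not {ψ φ} : Subf ψ φ → Subf ψ (not φ)
  | andL {ψ φ1 φ2} : Subf ψ φ1 → Subf ψ (and φ1 φ2)
  | andR {ψ φ1 φ2} : Subf ψ φ2 → Subf ψ (and φ1 φ2)
  | orL {ψ φ1 φ2} : Subf ψ φ1 → Subf ψ (or φ1 φ2)
  | orR {ψ φ1 φ2} : Subf ψ φ2 → Subf ψ (or φ1 φ2)
  | next {ψ φ} : Subf ψ φ → Subf ψ (next φ)
  | always {ψ φ} : Subf ψ φ → Subf ψ (always φ)
  | untlL {ψ φ1 φ2} : Subf ψ φ1 → Subf ψ (untl φ1 φ2)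
  | untlR {ψ φ1 φ2} : Subf ψ φ2 → Subf ψ (untl φ1 φ2)
  | know {ψ φ} : Subf ψ φ → Subf ψ (know φ)

/-- Size of a formula. -/
def size : KLTL P → ℕ
  | atom _ => 1
  | not φ => φ.size + 1
  | and φ ψ => φ.size + ψ.size + 1
  | or φ ψ => φ.size + ψ.size + 1
  | next φ => φ.size + 1
  | always φ => φ.size + 1
  | untl φ ψ => φ.size + ψ.size + 1
  | know φ => φ.size + 1

/-- Renaming of atomic propositions. -/
def map (f : P → P') : KLTL P → KLTL P'
  | atom p => atom (f p)
  | not φ => not (φ.map f)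
  | and φ ψ => and (φ.map f) (ψ.map f)
  | or φ ψ => or (φ.map f) (ψ.map f)
  | next φ => next (φ.map f)
  | always φ => always (φ.map f)
  | untl φ ψ => untl (φ.map f) (ψ.map f)
  | know φ => know (φ.map f)

/-- LTL satisfaction of a (K-free) formula on an infinite word over `2^P`
(the knowledge operator, which does not occur in LTL formulas, is interpreted
trivially over the singleton set of executions `{w}`). -/
def satW (φ : KLTL P) (w : ℕ → Set P) (i : ℕ) : Prop :=
  sat (fun x : Set P => x) (fun _ _ _ => True) {w} φ w i

end KLTL

/-! ## Automata on infinite words and trees -/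

/-- Universal co-Büchi word automaton. -/
structure UCW (Al Q : Type) where
  init : Set Q
  final : Set Q
  delta : Q → Al → Set Q

namespace UCW

variable {Al Q : Type}

def Complete (A : UCW Al Q) : Prop := ∀ q σ, (A.delta q σ).Nonempty

/-- Language with the universal co-Büchi condition, starting from the states `Q0`. -/
def LucFrom (A : UCW Al Q) (Q0 : Set Q) : Set (ℕ → Al) :=
  {w | ∀ q : ℕ → Q, q 0 ∈ Q0 → (∀ i, q (i + 1) ∈ A.delta (q i) (w i)) →
    {i | q i ∈ A.final}.Finite}

/-- Language with the universal co-Büchi acceptance condition. -/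
def Luc (A : UCW Al Q) : Set (ℕ → Al) := A.LucFrom A.init

end UCW

/-- The prefix of length `i` of an infinite sequence of directions. -/
def prefixOf {D : Type} (ds : ℕ → D) (i : ℕ) : List D :=
  List.ofFn (fun j : Fin i => ds j)

/-- Universal co-Büchi tree automaton, running on complete `Al`-labelled `D`-trees
(identified with functions `List D → Al`). -/
structure UCT (Al Q D : Type) where
  init : Set Q
  final : Set Q
  delta : Q → Al → D → Set Q

namespace UCT

variable {Al Q D : Type}

/-- Language with the universal co-Büchi condition: every branch of the (unique)
run visits final states finitely often. -/
def Luc (A : UCT Al Q D) : Set (List D → Al) :=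
  {t | ∀ (q : ℕ → Q) (ds : ℕ → D), q 0 ∈ A.init →
    (∀ i, q (i + 1) ∈ A.delta (q i) (t (prefixOf ds i)) (ds i)) →
    {i | q i ∈ A.final}.Finite}

/-- Language with the universal `B`-co-Büchi condition: every branch of the run
visits final states at most `B` times. -/
def LucB (A : UCT Al Q D) (B : ℕ) : Set (List D → Al) :=
  {t | ∀ (q : ℕ → Q) (ds : ℕ → D), q 0 ∈ A.init →
    (∀ i, q (i + 1) ∈ A.delta (q i) (t (prefixOf ds i)) (ds i)) →
    {i | q i ∈ A.final}.Finite ∧ {i | q i ∈ A.final}.ncard ≤ B}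

def Deterministic (A : UCT Al Q D) : Prop :=
  (∃ q0, A.init = {q0}) ∧ ∀ q σ d, (A.delta q σ d).Subsingleton

def Complete (A : UCT Al Q D) : Prop :=
  A.init.Nonempty ∧ ∀ q σ d, (A.delta q σ d).Nonempty

/-- `RunReach A t os q` holds iff some finite branch of the run of `A` on the
tree `t`, following the sequence of directions `os`, ends in state `q`. -/
inductive RunReach (A : UCT Al Q D) (t : List D → Al) : List D → Q → Prop
  | base {q} : q ∈ A.init → RunReach A t [] q
  | step {os q q' o} : RunReach A t os q → q' ∈ A.delta q (t os) o →
      RunReach A t (os ++ [o]) q'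

end UCT

/-! ## Strategies and realizability -/

namespace EnvModel

variable {P σ1 σ2 S 𝕂 : Type}

/-- KLTL satisfaction over a set `R` of executions of the model. -/
def ksat (M : EnvModel P σ1 σ2 S) (R : Set (ℕ → S)) (φ : KLTL P) (ρ : ℕ → S) (i : ℕ) : Prop :=
  KLTL.sat M.lab M.simUpTo R φ ρ i

/-- `M_E ⊨ φ`. -/
def Models (M : EnvModel P σ1 σ2 S) (φ : KLTL P) : Prop :=
  ∀ ρ ∈ M.exec, M.ksat M.exec φ ρ 0

/-- The executions of `M` compatible with a strategy (generic in the action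
alphabet `α`, to cover both plain strategies and extended ones). -/
def execWithGen {α : Type} (M : EnvModel P σ1 σ2 S) (proj : α → σ1)
    (lam : List (α × M.Obs) → α) : Set (ℕ → S) :=
  {ρ | ρ ∈ M.exec ∧ ∃ a : ℕ → α × σ2,
    (∀ i, M.trans (ρ i) (proj (a i).1) (a i).2 (ρ (i + 1))) ∧
    (∀ i, (a i).1 = lam (List.ofFn (fun j : Fin i => ((a j).1, M.obs (ρ j)))))}

/-- The executions of `M` compatible with a strategy `λ : (Σ1·O)* → Σ1`. -/
def execWith (M : EnvModel P σ1 σ2 S) (lam : List (σ1 × M.Obs) → σ1) : Set (ℕ → S) :=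
  M.execWithGen id lam

/-- The strategy `λ` realizes the KLTL formula `φ` in `M`. -/
def Realizes (M : EnvModel P σ1 σ2 S) (φ : KLTL P) (lam : List (σ1 × M.Obs) → σ1) : Prop :=
  ∀ ρ ∈ M.execWith lam, M.ksat (M.execWith lam) φ ρ 0

/-- `φ` is realizable in `M`. -/
def Realizable (M : EnvModel P σ1 σ2 S) (φ : KLTL P) : Prop :=
  ∃ lam, M.Realizes φ lam

/-- The strategy `λ` realizes the LTL formula `ψ` in `M` (LTL semantics on traces). -/
def RealizesLTL (M : EnvModel P σ1 σ2 S) (ψ : KLTL P) (lam : List (σ1 × M.Obs) → σ1) : Prop :=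
  ∀ ρ ∈ M.execWith lam, KLTL.satW ψ (fun i => M.lab (ρ i)) 0

/-- The strategy associated with a complete `α`-labelled `O`-tree. -/
def stratOf {α : Type} (M : EnvModel P σ1 σ2 S) (t : List M.Obs → α) :
    List (α × M.Obs) → α :=
  fun h => t (h.map Prod.snd)

/-! ## The LTL-to-UCT construction (Section 4) -/

/-- `post_a(I,o)`. -/
def post (M : EnvModel P σ1 σ2 S) (a : σ1) (I : Set S) (o : Set S) : Set S :=
  {s | s ∈ o ∧ ∃ a2, ∃ s' ∈ I, M.trans s' a a2 s}

/-- `I_{q,q'}` for a word automaton `A` over `2^P`. -/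
def Iqq {QA : Type} (M : EnvModel P σ1 σ2 S) (A : UCW (Set P) QA) (I : Set S)
    (q q' : QA) : Set S :=
  {s ∈ I | q' ∈ A.delta q (M.lab s)}

/-- The UCT associated with an environment model and a UCW for an LTL formula;
`none` plays the role of the extra (absorbing) state `(q_w, ∅)`. -/
def ltlToUCT {QA : Type} (M : EnvModel P σ1 σ2 S) (A : UCW (Set P) QA) :
    UCT σ1 (Option (QA × Set S)) M.Obs where
  init := {x | ∃ q0 ∈ A.init, x = some (q0, M.S0)}
  final := {x | ∃ q I, q ∈ A.final ∧ x = some (q, I)}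
  delta := fun x a o =>
    match x with
    | none => {none}
    | some (q, I) =>
      if M.post a I o.val = ∅ then {none}
      else {x' | ∃ q', (∃ s ∈ I, q' ∈ A.delta q (M.lab s)) ∧
            x' = some (q', M.post a (M.Iqq A I q q') o.val)}

/-! ## Extended actions, executions and strategies (Section 5) -/

/-- Extended labelling `τ_e'(s,K) = τ_e(s) ∪ K` over `P' = P ⊕ 𝕂`. -/
def elabE (M : EnvModel P σ1 σ2 S) (s : S) (K : Set 𝕂) : Set (P ⊕ 𝕂) :=
  (Sum.inl '' M.lab s) ∪ (Sum.inr '' K)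

/-- Extended labelling as a function on pairs. -/
def elabP (M : EnvModel P σ1 σ2 S) (x : S × Set 𝕂) : Set (P ⊕ 𝕂) :=
  M.elabE x.1 x.2

/-- Indistinguishability of e-executions up to position `i`: the state parts are
`∼_i`-related and the (visible) 𝕂-parts agree. -/
def esim (M : EnvModel P σ1 σ2 S) (i : ℕ) (ρ ρ' : ℕ → S × Set 𝕂) : Prop :=
  (∀ j ≤ i, M.vlab (ρ j).1 = M.vlab (ρ' j).1) ∧ (∀ j ≤ i, (ρ j).2 = (ρ' j).2)

/-- KLTL satisfaction over a set of e-executions. -/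
def esat (M : EnvModel P σ1 σ2 S) (R : Set (ℕ → S × Set 𝕂)) (φ : KLTL (P ⊕ 𝕂))
    (ρ : ℕ → S × Set 𝕂) (i : ℕ) : Prop :=
  KLTL.sat M.elabP M.esim R φ ρ i

/-- The e-executions compatible with an e-strategy `λ' : (Σ1'·O)* → Σ1'`. -/
def execWithE (M : EnvModel P σ1 σ2 S)
    (lam : List ((σ1 × Set 𝕂) × M.Obs) → σ1 × Set 𝕂) : Set (ℕ → S × Set 𝕂) :=
  {ρ | (fun i => (ρ i).1) ∈ M.exec ∧ ∃ a : ℕ → (σ1 × Set 𝕂) × σ2,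
    (∀ i, M.trans (ρ i).1 (a i).1.1 (a i).2 (ρ (i + 1)).1) ∧
    (∀ i, (ρ i).2 = (a i).1.2) ∧
    (∀ i, (a i).1 = lam (List.ofFn (fun j : Fin i => ((a j).1, M.obs (ρ j).1))))}

/-- The e-strategy `λ'` realizes the formula `ψ` over `P' = P ⊕ 𝕂` in `M`. -/
def RealizesE (M : EnvModel P σ1 σ2 S) (ψ : KLTL (P ⊕ 𝕂))
    (lam : List ((σ1 × Set 𝕂) × M.Obs) → σ1 × Set 𝕂) : Prop :=
  ∀ ρ ∈ M.execWithE lam, M.esat (M.execWithE lam) ψ ρ 0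

/-! ## Branches of strategy trees and their compatible executions -/

/-- The executions compatible with the infinite branch of the `Σ1`-labelled
`O`-tree `t` following the directions `ds` (the set `exec(M_E, τ(π))`). -/
def branchExec (M : EnvModel P σ1 σ2 S) (t : List M.Obs → σ1) (ds : ℕ → M.Obs) :
    Set (ℕ → S) :=
  {ρ | ρ ∈ M.exec ∧
    (∀ i, M.obsOf (ρ (i + 1)) = (ds i).val) ∧
    (∀ i, ∃ b, M.trans (ρ i) (t (prefixOf ds i)) b (ρ (i + 1)))}

/-- `R⟨π⟩`: the e-executions compatible with the branch of the
`Σ1'`-labelled `O`-tree `t` following the directions `ds`. -/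
def branchExecE (M : EnvModel P σ1 σ2 S) (t : List M.Obs → σ1 × Set 𝕂)
    (ds : ℕ → M.Obs) : Set (ℕ → S × Set 𝕂) :=
  {ρ | (fun i => (ρ i).1) ∈ M.exec ∧
    (∀ i, M.obsOf (ρ (i + 1)).1 = (ds i).val) ∧
    (∀ i, ∃ b, M.trans (ρ i).1 (t (prefixOf ds i)).1 b (ρ (i + 1)).1) ∧
    (∀ i, (ρ i).2 = (t (prefixOf ds i)).2)}

/-- `R⟨T,π,j⟩`: union of `R⟨π'⟩` over branches `π'` agreeing with `π` up to `j`. -/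
def branchSetE (M : EnvModel P σ1 σ2 S) (t : List M.Obs → σ1 × Set 𝕂)
    (ds : ℕ → M.Obs) (j : ℕ) : Set (ℕ → S × Set 𝕂) :=
  ⋃ ds' ∈ {ds' : ℕ → M.Obs | ∀ l < j, ds' l = ds l}, M.branchExecE t ds'

/-- `T` is fair with respect to `φ` (with `name k` the formula `γ` named by `k_γ`). -/
def Fair (M : EnvModel P σ1 σ2 S) (t : List M.Obs → σ1 × Set 𝕂)
    (name : 𝕂 → KLTL (P ⊕ 𝕂)) (φ : KLTL (P ⊕ 𝕂)) : Prop :=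
  ∀ (ds : ℕ → M.Obs) (j : ℕ) (k : 𝕂),
    k ∈ (t (prefixOf ds j)).2 →
    KLTL.Subf (KLTL.atom (Sum.inr k)) φ →
    ∀ ds' : ℕ → M.Obs, (∀ l < j, ds' l = ds l) →
    ∀ ρ ∈ M.branchExecE t ds',
      M.esat (M.branchExecE t ds') (name k) ρ j

/-! ## The extended LTL-to-UCT construction and the chain `T^d, …, T^0` -/

/-- `I_{q,q'}` for extended labels. -/
def eIqq {QW : Type} (M : EnvModel P σ1 σ2 S) (A : UCW (Set (P ⊕ 𝕂)) QW) (K : Set 𝕂)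
    (I : Set S) (q q' : QW) : Set S :=
  {s ∈ I | q' ∈ A.delta q (M.elabE s K)}

/-- Transition function of the LTL-to-UCT construction over extended actions. -/
def eDelta {QW : Type} (M : EnvModel P σ1 σ2 S) (A : UCW (Set (P ⊕ 𝕂)) QW) :
    Option (QW × Set S) → σ1 × Set 𝕂 → M.Obs → Set (Option (QW × Set S)) :=
  fun x aK o =>
    match x with
    | none => {none}
    | some (q, I) =>
      if M.post aK.1 I o.val = ∅ then {none}
      else {x' | ∃ q', (∃ s ∈ I, q' ∈ A.delta q (M.elabE s aK.2)) ∧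
            x' = some (q', M.post aK.1 (M.eIqq A aK.2 I q q') o.val)}

/-- The LTL-to-UCT construction over extended actions, with designated initial
word-automaton states `Q0`. -/
def ltlToUCTe {QW : Type} (M : EnvModel P σ1 σ2 S) (A : UCW (Set (P ⊕ 𝕂)) QW)
    (Q0 : Set QW) : UCT (σ1 × Set 𝕂) (Option (QW × Set S)) M.Obs where
  init := {x | ∃ q0 ∈ Q0, x = some (q0, M.S0)}
  final := {x | ∃ q I, q ∈ A.final ∧ x = some (q, I)}
  delta := M.eDelta A

end EnvModel

/-- One step of rewriting: `InnerRepl name φ φ'` holds iff `φ'` is obtained from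
`φ` by replacing each innermost subformula `K γ` by the fresh atomic
proposition `k_γ` (an atom `Sum.inr k` with `name k = γ`). -/
inductive InnerRepl {P 𝕂 : Type} (name : 𝕂 → KLTL (P ⊕ 𝕂)) :
    KLTL (P ⊕ 𝕂) → KLTL (P ⊕ 𝕂) → Prop
  | atom (p) : InnerRepl name (.atom p) (.atom p)
  | not {φ φ'} : InnerRepl name φ φ' → InnerRepl name (.not φ) (.not φ')
  | and {φ1 φ2 φ1' φ2'} : InnerRepl name φ1 φ1' → InnerRepl name φ2 φ2' →
      InnerRepl name (.and φ1 φ2) (.and φ1' φ2')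
  | or {φ1 φ2 φ1' φ2'} : InnerRepl name φ1 φ1' → InnerRepl name φ2 φ2' →
      InnerRepl name (.or φ1 φ2) (.or φ1' φ2')
  | next {φ φ'} : InnerRepl name φ φ' → InnerRepl name (.next φ) (.next φ')
  | always {φ φ'} : InnerRepl name φ φ' → InnerRepl name (.always φ) (.always φ')
  | untl {φ1 φ2 φ1' φ2'} : InnerRepl name φ1 φ1' → InnerRepl name φ2 φ2' →
      InnerRepl name (.untl φ1 φ2) (.untl φ1' φ2')
  | knowInner {γ : KLTL (P ⊕ 𝕂)} {k : 𝕂} : γ.NoKnow → name k = γ →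
      InnerRepl name (.know γ) (.atom (Sum.inr k))
  | knowOuter {γ γ'} : ¬ γ.NoKnow → InnerRepl name γ γ' →
      InnerRepl name (.know γ) (.know γ')

/-- `ψ⁻¹`: replace each atomic proposition `k_γ` by the formula `K γ`. -/
def KLTL.unrepl {P 𝕂 : Type} (name : 𝕂 → KLTL (P ⊕ 𝕂)) : KLTL (P ⊕ 𝕂) → KLTL (P ⊕ 𝕂)
  | .atom (Sum.inl p) => .atom (Sum.inl p)
  | .atom (Sum.inr k) => .know (name k)
  | .not φ => .not (unrepl name φ)
  | .and φ ψ => .and (unrepl name φ) (unrepl name ψ)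
  | .or φ ψ => .or (unrepl name φ) (unrepl name ψ)
  | .next φ => .next (unrepl name φ)
  | .always φ => .always (unrepl name φ)
  | .untl φ ψ => .untl (unrepl name φ) (unrepl name ψ)
  | .know φ => .know (unrepl name φ)

/-- `ChainStep M W initγ φnext Tnext Tcur`: `Tcur` (the automaton `T^i`) is
obtained from `Tnext` (the automaton `T^{i+1}`) by adding, for every transition
source `(q,I)` with extended action `(a,K)` and observation `o` and every
`k_γ ∈ K` occurring in `φ^{i+1} = φnext`, the transitions of the automaton
`T_{γ,I}` from its initial state `(q_0^γ, I)`. -/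
def ChainStep {P σ1 σ2 S 𝕂 QW : Type} (M : EnvModel P σ1 σ2 S)
    (W : UCW (Set (P ⊕ 𝕂)) QW) (initγ : 𝕂 → QW) (φnext : KLTL (P ⊕ 𝕂))
    (Tnext Tcur : UCT (σ1 × Set 𝕂) (Option (QW × Set S)) M.Obs) : Prop :=
  Tcur.init = Tnext.init ∧ Tcur.final = Tnext.final ∧
  (∀ aK o, Tcur.delta none aK o = Tnext.delta none aK o) ∧
  ∀ (q : QW) (I : Set S) (aK : σ1 × Set 𝕂) (o : M.Obs),
    Tcur.delta (some (q, I)) aK o =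
      Tnext.delta (some (q, I)) aK o ∪
      ⋃ k ∈ {k : 𝕂 | k ∈ aK.2 ∧ KLTL.Subf (KLTL.atom (Sum.inr k)) φnext},
        M.eDelta W (some (initγ k, I)) aK o

/-- The data of the Safraless construction for a KLTL⁺ formula: the fresh
propositions `𝕂` (with `name k` the formula `γ` named by `k = k_γ`), a word
automaton `W` containing (disjointly) the UCWs for `φ^d` and for each `γ`,
with initial states `inits` (for `φ^d`) resp. `initγ k` (for `γ`), the
sequence of formulas `φ^0, …, φ^d` and the chain of tree automata `T^0, …, T^d`. -/
structure KChain {P σ1 σ2 S : Type} (M : EnvModel P σ1 σ2 S) (𝕂 QW : Type) where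
  name : 𝕂 → KLTL (P ⊕ 𝕂)
  W : UCW (Set (P ⊕ 𝕂)) QW
  inits : Set QW
  initγ : 𝕂 → QW
  d : ℕ
  φs : ℕ → KLTL (P ⊕ 𝕂)
  Ts : ℕ → UCT (σ1 × Set 𝕂) (Option (QW × Set S)) M.Obs

/-- The defining properties of the construction of the chain `T^d, …, T^0`
from a KLTL⁺ formula `φ` and an environment model. -/
structure KChain.Wf {P σ1 σ2 S 𝕂 QW : Type} {M : EnvModel P σ1 σ2 S}
    (C : KChain (σ1 := σ1) M 𝕂 QW) (φ : KLTL P) : Prop where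
  hφ0 : C.φs 0 = φ.map Sum.inl
  hstep : ∀ i < C.d, InnerRepl C.name (C.φs i) (C.φs (i + 1))
  hLTL : (C.φs C.d).NoKnow
  hleast : ∀ i < C.d, ¬ (C.φs i).NoKnow
  hWcomplete : C.W.Complete
  hWd : C.W.LucFrom C.inits = {w | KLTL.satW (C.φs C.d) w 0}
  hWγ : ∀ k : 𝕂, C.W.LucFrom {C.initγ k} = {w | KLTL.satW (C.name k) w 0}
  hTd : C.Ts C.d = M.ltlToUCTe C.W C.inits
  hTstep : ∀ i < C.d, ChainStep M C.W C.initγ (C.φs (i + 1)) (C.Ts (i + 1)) (C.Ts i)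

/-! ## Counting subset construction, determinization and the safety game -/

/-- Initial counting function `F_0` of `Det(T,B)`. -/
def countInit {Al Q D : Type} (A : UCT Al Q D) : Q → ℤ :=
  fun q => if q ∈ A.init then (if q ∈ A.final then 1 else 0) else -1

/-- Transition function of the counting subset construction (`δ` of `Det(T,B)`). -/
def countTrans {Al Q D : Type} [Fintype Q] (A : UCT Al Q D) (B : ℕ)
    (F : Q → ℤ) (σ : Al) (d : D) : Q → ℤ :=
  fun q' =>
    (((Finset.univ : Finset Q).filter
        (fun q => q' ∈ A.delta q σ d ∧ F q ≠ -1)).image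
      (fun q => min ((B : ℤ) + 1) (F q + (if q' ∈ A.final then 1 else 0)))).max.unbotD (-1)

/-- The determinization `Det(T,B)` of a UCT with the `B`-co-Büchi condition,
presented as a tree automaton. -/
def detUCT {Al Q D : Type} [Fintype Q] (A : UCT Al Q D) (B : ℕ) :
    UCT Al (Q → ℤ) D where
  init := {countInit A}
  final := {F | ∃ q, F q > (B : ℤ)}
  delta := fun F σ d => {countTrans A B F σ d}

/-- Actions played by a system strategy in the safety game `G(T,B)` against
the environment's choices of directions `ds` (plays are identified with their
sequences of action/direction choices, the game states being determined). -/
def gameActs {Al D : Type} (st : List (Al × D) → Al) (ds : ℕ → D) : ℕ → Al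
  | i => st (List.ofFn (fun j : Fin i => (gameActs st ds j.1, ds j.1)))
  termination_by i => i
  decreasing_by exact j.2

/-- The sequence of system states of `G(T,B)` in the play where the system uses
the strategy `st` and the environment chooses the directions `ds`. -/
def gameStates {Al Q D : Type} [Fintype Q] (A : UCT Al Q D) (B : ℕ)
    (st : List (Al × D) → Al) (ds : ℕ → D) : ℕ → (Q → ℤ)
  | 0 => countInit A
  | i + 1 => countTrans A B (gameStates A B st ds i) (gameActs st ds i) (ds i)

/-- The system strategy `st` is winning in the safety game `G(T,B)`: every play
consistent with it only visits safe states (never a state of `α'`). -/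
def GameWin {Al Q D : Type} [Fintype Q] (A : UCT Al Q D) (B : ℕ)
    (st : List (Al × D) → Al) : Prop :=
  ∀ (ds : ℕ → D) (i : ℕ) (q : Q), gameStates A B st ds i q ≤ (B : ℤ)

/-- States of the safety game `G(T,B)` reachable from the initial state. -/
inductive GReach {Al Q D : Type} [Fintype Q] (A : UCT Al Q D) (B : ℕ) : (Q → ℤ) → Prop
  | base : GReach A B (countInit A)
  | step {F σ d} : GReach A B F → GReach A B (countTrans A B F σ d)

/-! ## Moore machines -/

/-- A Moore machine reading directions in `D` and outputting letters in `Al`. -/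
structure Moore (Al D Mt : Type) where
  init : Mt
  step : Mt → D → Mt
  out : Mt → Al

/-- The complete `Al`-labelled `D`-tree generated by a Moore machine. -/
def Moore.tree {Al D Mt : Type} (Mm : Moore Al D Mt) : List D → Al :=
  fun ds => Mm.out (ds.foldl Mm.step Mm.init)

end

/- The 𝕂-labels chosen by an e-strategy are a function of the observation history, hence
invisible to the knowledge operator when it is evaluated on formulas over `P`; forgetting
them turns an e-strategy into a plain strategy with the same executions, and labelling
every position with `∅` turns a plain strategy into an e-strategy with the same executions. -/

namespace EnvModel

variable {P σ1 σ2 S 𝕂 : Type}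

lemma obs_eq_of_vlab_eq (M : EnvModel P σ1 σ2 S) {s s' : S} (h : M.vlab s = M.vlab s') :
    M.obs s = M.obs s' :=
  Subtype.ext <| Set.ext fun u => by simp only [obs, obsOf, Set.mem_ofPred_eq, h]

/-- The 𝕂-parts of the e-executions in `R'` are determined by the visible history of their
state parts. -/
def KDetermined (M : EnvModel P σ1 σ2 S) (R' : Set (ℕ → S × Set 𝕂)) : Prop :=
  ∀ ρ ∈ R', ∀ ρ' ∈ R', ∀ i,
    M.simUpTo i (fun n => (ρ n).1) (fun n => (ρ' n).1) → M.esim i ρ ρ'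

lemma esat_map_inl_iff (M : EnvModel P σ1 σ2 S) {R' : Set (ℕ → S × Set 𝕂)}
    (hR' : M.KDetermined R') (φ : KLTL P) {ρ : ℕ → S × Set 𝕂} (hρ : ρ ∈ R') (i : ℕ) :
    M.esat R' (φ.map Sum.inl) ρ i ↔
      M.ksat ((fun ρ n => (ρ n).1) '' R') φ (fun n => (ρ n).1) i := by
  induction φ generalizing ρ i with
  | atom p => simp [esat, ksat, KLTL.sat, KLTL.map, elabP, elabE]
  | not φ ih => exact not_congr (ih hρ i)
  | and φ ψ ihφ ihψ => exact and_congr (ihφ hρ i) (ihψ hρ i)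
  | or φ ψ ihφ ihψ => exact or_congr (ihφ hρ i) (ihψ hρ i)
  | next φ ih => exact ih hρ (i + 1)
  | always φ ih => exact forall_congr' fun j => imp_congr_right fun _ => ih hρ j
  | untl φ ψ ihφ ihψ =>
      exact exists_congr fun j => and_congr_right fun _ => and_congr (ihψ hρ j)
        (forall_congr' fun k => imp_congr_right fun _ => imp_congr_right fun _ => ihφ hρ k)
  | know φ ih =>
      refine ⟨fun h => ?_, fun h ρ' hρ' hsim => (ih hρ' i).2 (h _ ⟨ρ', hρ', rfl⟩ hsim.1)⟩
      rintro _ ⟨ρ', hρ', rfl⟩ hsim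
      exact (ih hρ' i).1 (h ρ' hρ' (hR' ρ hρ ρ' hρ' i hsim))

lemma realizesE_map_inl_iff (M : EnvModel P σ1 σ2 S)
    {lam' : List ((σ1 × Set 𝕂) × M.Obs) → σ1 × Set 𝕂} {lam : List (σ1 × M.Obs) → σ1}
    (himage : (fun ρ n => (ρ n).1) '' M.execWithE lam' = M.execWith lam)
    (hK : M.KDetermined (M.execWithE lam')) (φ : KLTL P) :
    M.RealizesE (φ.map Sum.inl) lam' ↔ M.Realizes φ lam := by
  rw [Realizes, ← himage, Set.forall_mem_image]
  exact forall₂_congr fun ρ hρ => himage ▸ M.esat_map_inl_iff hK φ hρ 0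

def replay {α O : Type} (lam : List (α × O) → α) (os : List O) : List (α × O) :=
  os.foldl (fun h o => h ++ [(lam h, o)]) []

lemma replay_append_singleton {α O : Type} (lam : List (α × O) → α) (os : List O) (o : O) :
    replay lam (os ++ [o]) = replay lam os ++ [(lam (replay lam os), o)] := by
  simp [replay, List.foldl_append]

lemma ofFn_eq_replay_of_forall_eq {α O : Type} {lam : List (α × O) → α} {a : ℕ → α}
    {o : ℕ → O} (ha : ∀ i, a i = lam (List.ofFn fun j : Fin i => (a j, o j))) (i : ℕ) :
    (List.ofFn fun j : Fin i => (a j, o j)) = replay lam (List.ofFn fun j : Fin i => o j) := by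
  induction i with
  | zero => rfl
  | succ n ih =>
      simp only [List.ofFn_succ', List.concat_eq_append, Fin.val_castSucc, Fin.val_last]
      rw [replay_append_singleton, ← ih, ← ha n]

lemma ofFn_replay_eq_replay {α O : Type} (lam : List (α × O) → α) (o : ℕ → O) (i : ℕ) :
    (List.ofFn fun j : Fin i => (lam (replay lam (List.ofFn fun l : Fin j => o l)), o j)) =
      replay lam (List.ofFn fun j : Fin i => o j) := by
  induction i with
  | zero => rfl
  | succ n ih =>
      simp only [List.ofFn_succ', List.concat_eq_append, Fin.val_castSucc, Fin.val_last]
      rw [replay_append_singleton, ih]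

/-- Only the observations of the history are read: the moves of `lam'` along it, including
the 𝕂-labels that a plain history lacks, are recomputed by `replay`. -/
def toStrategy (M : EnvModel P σ1 σ2 S) (lam' : List ((σ1 × Set 𝕂) × M.Obs) → σ1 × Set 𝕂) :
    List (σ1 × M.Obs) → σ1 :=
  fun h => (lam' (replay lam' (h.map Prod.snd))).1

def toEStrategy (M : EnvModel P σ1 σ2 S) (lam : List (σ1 × M.Obs) → σ1) :
    List ((σ1 × Set 𝕂) × M.Obs) → σ1 × Set 𝕂 :=
  fun h => (lam (h.map fun x => (x.1.1, x.2)), ∅)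

section toStrategy

variable (M : EnvModel P σ1 σ2 S) (lam' : List ((σ1 × Set 𝕂) × M.Obs) → σ1 × Set 𝕂)

lemma snd_eq_of_mem_execWithE {ρ : ℕ → S × Set 𝕂} (hρ : ρ ∈ M.execWithE lam') (i : ℕ) :
    (ρ i).2 = (lam' (replay lam' (List.ofFn fun j : Fin i => M.obs (ρ j).1))).2 := by
  obtain ⟨-, a, -, hK, ha⟩ := hρ
  rw [hK i, ha i, ofFn_eq_replay_of_forall_eq (a := fun i => (a i).1)
    (o := fun j => M.obs (ρ j).1) ha i]

lemma image_execWithE :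
    (fun ρ n => (ρ n).1) '' M.execWithE lam' = M.execWith (M.toStrategy lam') := by
  ext ρ
  constructor
  · rintro ⟨ρ', ⟨hexec, a, htrans, -, ha⟩, rfl⟩
    refine ⟨hexec, fun i => ((a i).1.1, (a i).2), htrans, fun i => ?_⟩
    have hrep := ofFn_eq_replay_of_forall_eq (a := fun i => (a i).1)
      (o := fun j => M.obs (ρ' j).1) ha i
    simp only [toStrategy, List.map_ofFn, Function.comp_def]
    rw [← hrep, ← ha]
  · rintro ⟨hexec, a, htrans, ha⟩
    set b : ℕ → σ1 × Set 𝕂 := fun i => lam' (replay lam' (List.ofFn fun j : Fin i => M.obs (ρ j)))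
    have hb : ∀ i, (a i).1 = (b i).1 := fun i => by
      rw [ha i]
      simp only [toStrategy, List.map_ofFn, Function.comp_def, b]
    refine ⟨fun i => (ρ i, (b i).2), ⟨hexec, fun i => (b i, (a i).2), fun i => ?_, fun _ => rfl,
      fun i => ?_⟩, rfl⟩
    · exact hb i ▸ htrans i
    · show b i = lam' (List.ofFn fun j : Fin i => (b j, M.obs (ρ j)))
      exact (congrArg lam' (ofFn_replay_eq_replay lam' (fun j => M.obs (ρ j)) i)).symm

lemma kDetermined_execWithE : M.KDetermined (M.execWithE lam') := by
  intro ρ hρ ρ' hρ' i hsim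
  refine ⟨hsim, fun j hj => ?_⟩
  rw [M.snd_eq_of_mem_execWithE lam' hρ, M.snd_eq_of_mem_execWithE lam' hρ']
  congr 3
  exact List.ofFn_inj.2 (funext fun l => M.obs_eq_of_vlab_eq (hsim l (by omega)))

end toStrategy

section toEStrategy

variable (M : EnvModel P σ1 σ2 S) (lam : List (σ1 × M.Obs) → σ1)

lemma image_execWithE_toEStrategy :
    (fun ρ n => (ρ n).1) '' M.execWithE (𝕂 := 𝕂) (M.toEStrategy lam) = M.execWith lam := by
  ext ρ
  constructor
  · rintro ⟨ρ', ⟨hexec, a, htrans, -, ha⟩, rfl⟩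
    refine ⟨hexec, fun i => ((a i).1.1, (a i).2), htrans, fun i => ?_⟩
    change (a i).1.1 = _
    rw [ha i]
    simp only [toEStrategy, List.map_ofFn, Function.comp_def]
  · rintro ⟨hexec, a, htrans, ha⟩
    refine ⟨fun i => (ρ i, ∅), ⟨hexec, fun i => (((a i).1, ∅), (a i).2), htrans, fun _ => rfl,
      fun i => ?_⟩, rfl⟩
    simp only [toEStrategy, List.map_ofFn, Function.comp_def]
    exact congrArg (·, ∅) (ha i)

lemma kDetermined_execWithE_toEStrategy :
    M.KDetermined (M.execWithE (𝕂 := 𝕂) (M.toEStrategy lam)) := by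
  have hK : ∀ ρ ∈ M.execWithE (𝕂 := 𝕂) (M.toEStrategy lam), ∀ i, (ρ i).2 = ∅ := by
    rintro ρ ⟨-, a, -, hK, ha⟩ i
    rw [hK i, ha i]
    rfl
  exact fun ρ hρ ρ' hρ' i hsim => ⟨hsim, fun j _ => (hK ρ hρ j).trans (hK ρ' hρ' j).symm⟩

end toEStrategy

end EnvModel

theorem estrategy_realizable_iff_strategy_realizable_general
    {P σ1 σ2 S 𝕂 : Type}
    (M : EnvModel P σ1 σ2 S)
    (φ : KLTL P) :
    (∃ lam', M.RealizesE (𝕂 := 𝕂) (φ.map Sum.inl) lam') ↔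
      ∃ lam, M.Realizes φ lam :=
  ⟨fun ⟨lam', h⟩ => ⟨M.toStrategy lam',
      (M.realizesE_map_inl_iff (M.image_execWithE lam') (M.kDetermined_execWithE lam') φ).1 h⟩,
    fun ⟨lam, h⟩ => ⟨M.toEStrategy lam,
      (M.realizesE_map_inl_iff (M.image_execWithE_toEStrategy lam)
        (M.kDetermined_execWithE_toEStrategy lam) φ).2 h⟩⟩

theorem estrategy_realizable_iff_strategy_realizable
    {P σ1 σ2 S 𝕂 : Type} [Fintype P] [Fintype σ1] [Fintype σ2] [Fintype S]
    [Fintype 𝕂]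
    (M : EnvModel P σ1 σ2 S) (hdf : M.DeadlockFree) (hsc : M.SysComplete)
    (φ : KLTL P) :
    (∃ lam', M.RealizesE (𝕂 := 𝕂) (φ.map Sum.inl) lam') ↔
      ∃ lam, M.Realizes φ lam :=
  estrategy_realizable_iff_strategy_realizable_general M φ
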